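/- arXiv:math/9912041 — 14 statements merged into one kernel-verified Lean document; each statement's English description precedes it below -/
import Mathlib

section
/- The point P₁ = (s²/12, s²/2) on the elliptic curve C_s : y² = x³ + a(s)x + b(s) (with a, b as specified) has order exactly 3 in the group law, provided s ∉ {0, 27} (so that C_s is smooth). -/
open WeierstrassCurve

/-- The family C_s : y² = x³ + a(s)x + b(s) of torus type. -/
noncomputable def Ctorus (s : ℚ) : Affine ℚ :=
  { a₁ := 0, a₂ := 0, a₃ := 0,
    a₄ := -s ^ 4 / 48 + s ^ 3 / 2,
    a₆ := -s ^ 5 / 24 + s ^ 4 / 4 + s ^ 6 / 864 }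

/-!
P₁ is a flex of C_s: the tangent line at P₁ has slope s/2 and meets the curve again only at P₁,
so 2P₁ = -P₁ and P₁ has order 3.
-/

namespace WeierstrassCurve.Affine.Point

variable {F : Type*} [Field F] [DecidableEq F] {W : Affine F} {x y : F}

theorem add_self_eq_neg_of_addX_slope_eq (h : W.Nonsingular x y) (hy : y ≠ W.negY x y)
    (hx : W.addX x x (W.slope x x y y) = x) : some _ _ h + some _ _ h = -some _ _ h := by
  have hnegAddY : W.negAddY x x y (W.slope x x y y) = y := by
    rw [negAddY, hx, sub_self, mul_zero, zero_add]
  rw [add_self_of_Y_ne' hy]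
  congr 2

theorem addOrderOf_eq_three_of_addX_slope_eq (h : W.Nonsingular x y) (hy : y ≠ W.negY x y)
    (hx : W.addX x x (W.slope x x y y) = x) : addOrderOf (some _ _ h) = 3 := by
  have : Fact (Nat.Prime 3) := ⟨Nat.prime_three⟩
  refine addOrderOf_eq_prime ?_ (some_ne_zero h)
  rw [succ_nsmul, two_nsmul, add_self_eq_neg_of_addX_slope_eq h hy hx, neg_add_cancel]

end WeierstrassCurve.Affine.Point

section Ctorus

variable {s : ℚ}

theorem ctorus_Y_ne_negY (h0 : s ≠ 0) :
    s ^ 2 / 2 ≠ (Ctorus s).negY (s ^ 2 / 12) (s ^ 2 / 2) := by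
  simp only [Ctorus, Affine.negY]
  intro h
  exact pow_ne_zero 2 h0 (by linarith)

theorem ctorus_nonsingular (h0 : s ≠ 0) : (Ctorus s).Nonsingular (s ^ 2 / 12) (s ^ 2 / 2) := by
  refine (Affine.nonsingular_iff _ _).2 ⟨?_, Or.inr (ctorus_Y_ne_negY h0)⟩
  rw [Affine.equation_iff]
  simp only [Ctorus]
  ring

theorem ctorus_slope (h0 : s ≠ 0) :
    (Ctorus s).slope (s ^ 2 / 12) (s ^ 2 / 12) (s ^ 2 / 2) (s ^ 2 / 2) = s / 2 := by
  rw [Affine.slope_of_Y_ne rfl (ctorus_Y_ne_negY h0)]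
  simp only [Ctorus, Affine.negY]
  field_simp
  ring

theorem ctorus_addX_slope (h0 : s ≠ 0) :
    (Ctorus s).addX (s ^ 2 / 12) (s ^ 2 / 12)
      ((Ctorus s).slope (s ^ 2 / 12) (s ^ 2 / 12) (s ^ 2 / 2) (s ^ 2 / 2)) = s ^ 2 / 12 := by
  rw [ctorus_slope h0]
  simp only [Ctorus, Affine.addX]
  ring

end Ctorus

theorem stmt2_general (s : ℚ) (h0 : s ≠ 0) :
    ∃ h : (Ctorus s).Nonsingular (s ^ 2 / 12) (s ^ 2 / 2),
      addOrderOf (Affine.Point.some _ _ h) = 3 :=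
  ⟨ctorus_nonsingular h0, Affine.Point.addOrderOf_eq_three_of_addX_slope_eq _
    (ctorus_Y_ne_negY h0) (ctorus_addX_slope h0)⟩

/-- The point P₁ = (s²/12, s²/2) on C_s has order exactly 3 for s ≠ 0, 27. -/
theorem stmt2 (s : ℚ) (h0 : s ≠ 0) (h27 : s ≠ 27) :
    ∃ h : (Ctorus s).Nonsingular (s ^ 2 / 12) (s ^ 2 / 2),
      addOrderOf (Affine.Point.some _ _ h) = 3 :=
  stmt2_general s h0
end

section
/- The substitution s = φ₆(u) := 32/((1+2u)(2u-1)²) and m = φ₆(u)·u satisfies the equation s³ - 32s² - 2ms² - 4m²s + 8m³ = 0 identically in u (for u ≠ ±1/2). -/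
/-- s = φ₆(u), m = φ₆(u)·u satisfy s³ - 32s² - 2ms² - 4m²s + 8m³ = 0. -/
theorem stmt3 (u : ℚ) (h1 : u ≠ 1 / 2) (h2 : u ≠ -1 / 2) :
    (32 / ((1 + 2 * u) * (2 * u - 1) ^ 2)) ^ 3
      - 32 * (32 / ((1 + 2 * u) * (2 * u - 1) ^ 2)) ^ 2
      - 2 * (32 / ((1 + 2 * u) * (2 * u - 1) ^ 2) * u)
          * (32 / ((1 + 2 * u) * (2 * u - 1) ^ 2)) ^ 2
      - 4 * (32 / ((1 + 2 * u) * (2 * u - 1) ^ 2) * u) ^ 2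
          * (32 / ((1 + 2 * u) * (2 * u - 1) ^ 2))
      + 8 * (32 / ((1 + 2 * u) * (2 * u - 1) ^ 2) * u) ^ 3 = 0 := by
  have ha : (1 + 2 * u) ≠ 0 := by intro h; apply h2; linarith
  have hb : (2 * u - 1) ≠ 0 := by intro h; apply h1; linarith
  field_simp
  ring
end

section
/- The substitution u = φ₂(r) := (-36+5r²)/(6(12+r²)) and v = v(r) := -(r²+24r-36)/(6(12+r²)) satisfies the conic equation 4u² - 2u + 4uv - 1 - 2v + 4v² = 0 identically in r. -/
/-- u = φ₂(r), v = v(r) satisfy the conic 4u² - 2u + 4uv - 1 - 2v + 4v² = 0. -/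
theorem stmt4 (r : ℚ) :
    4 * ((-36 + 5 * r ^ 2) / (6 * (12 + r ^ 2))) ^ 2
      - 2 * ((-36 + 5 * r ^ 2) / (6 * (12 + r ^ 2)))
      + 4 * ((-36 + 5 * r ^ 2) / (6 * (12 + r ^ 2)))
          * (-(r ^ 2 + 24 * r - 36) / (6 * (12 + r ^ 2)))
      - 1 - 2 * (-(r ^ 2 + 24 * r - 36) / (6 * (12 + r ^ 2)))
      + 4 * (-(r ^ 2 + 24 * r - 36) / (6 * (12 + r ^ 2))) ^ 2 = 0 := by
  have h : (6 * (12 + r ^ 2)) ≠ 0 := by positivity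
  field_simp
  ring
end

section
/- The substitutions u(ν) = -(ν⁴+2ν²+5)/(2(ν⁴−6ν²−3)) and n₁(ν) = -16(2ν²−4ν³−4ν+ν⁴−3)/(ν⁴−6ν²−3) satisfy Γ(u, n₁) = 0 identically in ν, where Γ(u,n₁) := −786432u⁴ − 98304n₁u³ − 524288u³ + 393216u² − 16384n₁u² − 3072n₁²u² + 131072u + 24576n₁u + 4096n₁ + 16384 + 256n₁² + n₁⁴. -/
/-- u(ν), n₁(ν) satisfy Γ(u, n₁) = 0. -/
theorem stmt7 (ν : ℚ) (h : ν ^ 4 - 6 * ν ^ 2 - 3 ≠ 0) :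
    letI u : ℚ := -(ν ^ 4 + 2 * ν ^ 2 + 5) / (2 * (ν ^ 4 - 6 * ν ^ 2 - 3))
    letI n₁ : ℚ := (-16 * (2 * ν ^ 2 - 4 * ν ^ 3 - 4 * ν + ν ^ 4 - 3)
      / (ν ^ 4 - 6 * ν ^ 2 - 3))
    (-786432 * u ^ 4 - 98304 * n₁ * u ^ 3 - 524288 * u ^ 3 + 393216 * u ^ 2
      - 16384 * n₁ * u ^ 2 - 3072 * n₁ ^ 2 * u ^ 2 + 131072 * u
      + 24576 * n₁ * u + 4096 * n₁ + 16384 + 256 * n₁ ^ 2 + n₁ ^ 4 = 0) := by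
  -- `field_simp` rewrites the denominator into this shape before looking for its nonvanishing.
  have hden : ν ^ 2 * (ν ^ 2 - 6) - 3 ≠ 0 := by convert h using 1; ring
  field_simp
  ring
end

section
/- For all ν with ν⁴−6ν²−3 ≠ 0 and (ν−1)(ν+1)(ν²+1) ≠ 0, the identity φ₆(u(ν)) = -(ν⁴−3−6ν²)³/((ν−1)⁴(1+ν)⁴(1+ν²)) holds, where φ₆(u) = 32/((1+2u)(2u−1)²) and u(ν) = -(ν⁴+2ν²+5)/(2(ν⁴−6ν²−3)). -/
/-!
With `d = ν⁴ - 6ν² - 3` and `u = -(ν⁴ + 2ν² + 5) / (2d)`, both factors of the denominator of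
`φ₆(u)` factor completely: `1 + 2u = -8(ν² + 1)/d` and `2u - 1 = -2(ν² - 1)²/d`. Hence
`φ₆(u) = -d³ / ((ν² + 1)(ν² - 1)⁴)`, which is `φ₁₂(ν)`.
-/

section

variable {K : Type*} [Field K] {ν : K}

theorem one_add_two_mul_u_eq (h2 : (2 : K) ≠ 0) (hd : ν ^ 4 - 6 * ν ^ 2 - 3 ≠ 0) :
    1 + 2 * (-(ν ^ 4 + 2 * ν ^ 2 + 5) / (2 * (ν ^ 4 - 6 * ν ^ 2 - 3))) =
      -8 * (ν ^ 2 + 1) / (ν ^ 4 - 6 * ν ^ 2 - 3) := by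
  rw [← mul_div_assoc, mul_div_mul_left _ _ h2, one_add_div hd]
  ring

theorem two_mul_u_sub_one_eq (h2 : (2 : K) ≠ 0) (hd : ν ^ 4 - 6 * ν ^ 2 - 3 ≠ 0) :
    2 * (-(ν ^ 4 + 2 * ν ^ 2 + 5) / (2 * (ν ^ 4 - 6 * ν ^ 2 - 3))) - 1 =
      -2 * (ν ^ 2 - 1) ^ 2 / (ν ^ 4 - 6 * ν ^ 2 - 3) := by
  rw [← mul_div_assoc, mul_div_mul_left _ _ h2, div_sub_one hd]
  ring

theorem phi6_factored_eq (h2 : (2 : K) ≠ 0) (a b d : K) :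
    32 / ((-8 * a / d) * (-2 * b ^ 2 / d) ^ 2) = -d ^ 3 / (a * b ^ 4) := by
  have h32 : (32 : K) ≠ 0 := by
    simpa [show (32 : K) = 2 ^ 5 by norm_num] using pow_ne_zero 5 h2
  calc 32 / ((-8 * a / d) * (-2 * b ^ 2 / d) ^ 2)
      = 32 / (32 * -(a * b ^ 4) / d ^ 3) := by ring
    _ = 32 * d ^ 3 / (32 * -(a * b ^ 4)) := div_div_eq_mul_div _ _ _
    _ = -d ^ 3 / (a * b ^ 4) := by rw [mul_div_mul_left _ _ h32, div_neg, neg_div]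

end

theorem stmt8_general (ν : ℚ) (h : ν ^ 4 - 6 * ν ^ 2 - 3 ≠ 0) :
    letI u : ℚ := -(ν ^ 4 + 2 * ν ^ 2 + 5) / (2 * (ν ^ 4 - 6 * ν ^ 2 - 3))
    32 / ((1 + 2 * u) * (2 * u - 1) ^ 2) =
      -(ν ^ 4 - 3 - 6 * ν ^ 2) ^ 3
        / ((ν - 1) ^ 4 * (1 + ν) ^ 4 * (1 + ν ^ 2)) := by
  rw [one_add_two_mul_u_eq two_ne_zero h, two_mul_u_sub_one_eq two_ne_zero h,
    phi6_factored_eq two_ne_zero]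
  congr 1 <;> ring

/-- φ₆(u(ν)) = -(ν⁴-3-6ν²)³/((ν-1)⁴(1+ν)⁴(1+ν²)). -/
theorem stmt8 (ν : ℚ) (h : ν ^ 4 - 6 * ν ^ 2 - 3 ≠ 0)
    (h' : (ν - 1) * (ν + 1) * (ν ^ 2 + 1) ≠ 0) :
    letI u : ℚ := -(ν ^ 4 + 2 * ν ^ 2 + 5) / (2 * (ν ^ 4 - 6 * ν ^ 2 - 3))
    32 / ((1 + 2 * u) * (2 * u - 1) ^ 2) =
      -(ν ^ 4 - 3 - 6 * ν ^ 2) ^ 3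
        / ((ν - 1) ^ 4 * (1 + ν) ^ 4 * (1 + ν ^ 2)) :=
  stmt8_general ν h
end

section
/- The point P = (-81, 4374) on the elliptic curve y² = x³ − 98415x + 11691702 has order exactly 6, and its multiples are 2P = (243, −1458), 3P = (162, 0), 4P = (243, 1458), 5P = (−81, −4374). -/
/-!
The multiples of P are computed by the chord-and-tangent law: the tangent at P has slope -9 and
gives 2P; the chords through P and 2P, 3P, 4P have slopes -18, -18, -9 and give 3P, 4P, 5P.
Since 5P = (-81, -4374) = -P, we get 6P = O, while none of P, ..., 5P is the point at infinity.
-/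

open WeierstrassCurve

/-- The elliptic curve C₅₄ : y² = x³ - 98415x + 11691702. -/
noncomputable def C54 : Affine ℚ :=
  { a₁ := 0, a₂ := 0, a₃ := 0, a₄ := -98415, a₆ := 11691702 }

namespace WeierstrassCurve.Affine.Point

variable {F : Type*} [Field F] [DecidableEq F] {W : Affine F} {x₁ x₂ x₃ y₁ y₂ y₃ ℓ : F}

lemma some_add_some_of_X_ne (h₁ : W.Nonsingular x₁ y₁) (h₂ : W.Nonsingular x₂ y₂)
    (h₃ : W.Nonsingular x₃ y₃) (hx : x₁ ≠ x₂) (hℓ : y₁ - y₂ = ℓ * (x₁ - x₂))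
    (hx₃ : W.addX x₁ x₂ ℓ = x₃) (hy₃ : W.addY x₁ x₂ y₁ ℓ = y₃) :
    some _ _ h₁ + some _ _ h₂ = some _ _ h₃ := by
  obtain rfl : W.slope x₁ x₂ y₁ y₂ = ℓ := by
    rw [slope_of_X_ne hx, hℓ, mul_div_cancel_right₀ _ (sub_ne_zero.mpr hx)]
  subst hx₃ hy₃
  exact add_of_X_ne hx

lemma some_add_self_of_Y_ne (h₁ : W.Nonsingular x₁ y₁) (h₃ : W.Nonsingular x₃ y₃)
    (hy : y₁ ≠ W.negY x₁ y₁)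
    (hℓ : 3 * x₁ ^ 2 + 2 * W.a₂ * x₁ + W.a₄ - W.a₁ * y₁ = ℓ * (y₁ - W.negY x₁ y₁))
    (hx₃ : W.addX x₁ x₁ ℓ = x₃) (hy₃ : W.addY x₁ x₁ y₁ ℓ = y₃) :
    some _ _ h₁ + some _ _ h₁ = some _ _ h₃ := by
  obtain rfl : W.slope x₁ x₁ y₁ y₁ = ℓ := by
    rw [slope_of_Y_ne rfl hy, hℓ, mul_div_cancel_right₀ _ (sub_ne_zero.mpr hy)]
  subst hx₃ hy₃
  exact add_self_of_Y_ne hy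

end WeierstrassCurve.Affine.Point

open Affine.Point

lemma C54_nonsingular_iff (x y : ℚ) : C54.Nonsingular x y ↔
    y ^ 2 = x ^ 3 - 98415 * x + 11691702 ∧ (3 * x ^ 2 ≠ 98415 ∨ y ≠ 0) := by
  rw [Affine.nonsingular_iff', Affine.equation_iff]
  simp only [C54]
  refine and_congr (by ring_nf) (or_congr ?_ ?_) <;> grind

/-- P = (-81, 4374) has order exactly 6 with multiples as listed. -/
theorem stmt9 :
    ∃ (hP : C54.Nonsingular (-81) 4374) (h2 : C54.Nonsingular 243 (-1458))
      (h3 : C54.Nonsingular 162 0) (h4 : C54.Nonsingular 243 1458)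
      (h5 : C54.Nonsingular (-81) (-4374)),
      addOrderOf (Affine.Point.some _ _ hP) = 6 ∧
      (2 : ℕ) • Affine.Point.some _ _ hP = Affine.Point.some _ _ h2 ∧
      (3 : ℕ) • Affine.Point.some _ _ hP = Affine.Point.some _ _ h3 ∧
      (4 : ℕ) • Affine.Point.some _ _ hP = Affine.Point.some _ _ h4 ∧
      (5 : ℕ) • Affine.Point.some _ _ hP = Affine.Point.some _ _ h5 := by
  have hP : C54.Nonsingular (-81) 4374 := (C54_nonsingular_iff _ _).mpr (by norm_num)
  have h2 : C54.Nonsingular 243 (-1458) := (C54_nonsingular_iff _ _).mpr (by norm_num)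
  have h3 : C54.Nonsingular 162 0 := (C54_nonsingular_iff _ _).mpr (by norm_num)
  have h4 : C54.Nonsingular 243 1458 := (C54_nonsingular_iff _ _).mpr (by norm_num)
  have h5 : C54.Nonsingular (-81) (-4374) := (C54_nonsingular_iff _ _).mpr (by norm_num)
  set P := some _ _ hP
  have n2 : 2 • P = some _ _ h2 := by
    rw [two_nsmul]
    exact some_add_self_of_Y_ne hP h2 (ℓ := -9) (by norm_num [C54]) (by norm_num [C54])
      (by norm_num [C54]) (by norm_num [C54, Affine.addY])
  have n3 : 3 • P = some _ _ h3 := by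
    rw [succ_nsmul, n2]
    exact some_add_some_of_X_ne h2 hP h3 (ℓ := -18) (by norm_num) (by norm_num)
      (by norm_num [C54]) (by norm_num [C54, Affine.addY])
  have n4 : 4 • P = some _ _ h4 := by
    rw [succ_nsmul, n3]
    exact some_add_some_of_X_ne h3 hP h4 (ℓ := -18) (by norm_num) (by norm_num)
      (by norm_num [C54]) (by norm_num [C54, Affine.addY])
  have n5 : 5 • P = some _ _ h5 := by
    rw [succ_nsmul, n4]
    exact some_add_some_of_X_ne h4 hP h5 (ℓ := -9) (by norm_num) (by norm_num)
      (by norm_num [C54]) (by norm_num [C54, Affine.addY])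
  have n6 : 6 • P = 0 := by
    rw [succ_nsmul, n5]
    exact add_of_Y_eq rfl (by norm_num [C54])
  refine ⟨hP, h2, h3, h4, h5, (addOrderOf_eq_iff (by norm_num)).mpr ⟨n6, ?_⟩, n2, n3, n4, n5⟩
  intro m hm hm0
  interval_cases m <;> simp [P, n2, n3, n4, n5]
end

section
/- The map τ(x,y) = (81(2x−567)/(x−162), −19683·y/(x−162)²) sends points of the elliptic curve y² = x³ − 98415x + 11691702 to points of the same curve; i.e., if y² = x³ − 98415x + 11691702 and x ≠ 162, then q² = p³ − 98415p + 11691702 where p = 81(2x−567)/(x−162) and q = −19683y/(x−162)². -/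
/-!
The point `T = (162, 0)` is a 2-torsion point of the curve (162 is a root of the cubic), and
`τ` is `P ↦ T - P`. The identity holds for any root `e` of any cubic `f = X³ + aX + b`: writing
`u = x - e` and `c = f'(e)`, one has `f(e + u) = u (u² + 3eu + c)`, hence
`f(e + c/u) = c² f(e + u) / u⁴`.
-/

theorem sub_twoTorsion_mem_curve {K : Type*} [Field K] {a b e x y : K}
    (he : e ^ 3 + a * e + b = 0) (h : y ^ 2 = x ^ 3 + a * x + b) (hx : x ≠ e) :
    ((3 * e ^ 2 + a) * y / (x - e) ^ 2) ^ 2 =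
      (e + (3 * e ^ 2 + a) / (x - e)) ^ 3 + a * (e + (3 * e ^ 2 + a) / (x - e)) + b := by
  have hu : x - e ≠ 0 := sub_ne_zero.mpr hx
  field_simp
  linear_combination (3 * e ^ 2 + a) ^ 2 * h + ((3 * e ^ 2 + a) ^ 2 - (x - e) ^ 4) * he

/-- τ maps points of y² = x³ - 98415x + 11691702 to points of the same curve. -/
theorem stmt10 (x y : ℚ) (h : y ^ 2 = x ^ 3 - 98415 * x + 11691702)
    (hx : x ≠ 162) :
    (-19683 * y / (x - 162) ^ 2) ^ 2 =
      (81 * (2 * x - 567) / (x - 162)) ^ 3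
        - 98415 * (81 * (2 * x - 567) / (x - 162)) + 11691702 := by
  have key := sub_twoTorsion_mem_curve (a := -98415) (b := 11691702) (x := x) (y := y)
    (by norm_num) (by linear_combination h) hx
  have hp : 81 * (2 * x - 567) / (x - 162) = 162 + (3 * 162 ^ 2 + -98415) / (x - 162) := by
    field_simp [sub_ne_zero.mpr hx]
    ring
  rw [hp]
  norm_num at key ⊢
  linear_combination key
end

section
/- On the elliptic curve C : y² = x³ − 98415x + 11691702, the involution τ(x,y) = (81(2x−567)/(x−162), −19683y/(x−162)²) equals the map P ↦ −P + T, where T = (162, 0) is a 2-torsion point and −P denotes (x, −y); i.e., τ(P) = (x, −y) + (162, 0) in the group law. -/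
/-!
`-P + T` is computed by the chord through `(x, -y)` and `T = (e, 0)`, of slope `-y / (x - e)`.
Since `T` lies on `y² = x³ + a₄x + a₆`, the factor `x - e` divides `y²`, with cofactor
`x² + e x + e² + a₄`, and the chord formulas collapse to
`((e x + 2e² + a₄) / (x - e), (3e² + a₄) y / (x - e)²)`; for `e = 162` this is `τ`.
-/

open WeierstrassCurve

namespace WeierstrassCurve.Affine

variable {F : Type*} [Field F] {W : Affine F} [W.IsShortNF]

lemma equation_iff_of_isShortNF {x y : F} :
    W.Equation x y ↔ y ^ 2 = x ^ 3 + W.a₄ * x + W.a₆ := by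
  simp [equation_iff]

lemma negY_of_isShortNF (x y : F) : W.negY x y = -y := by
  simp [negY]

lemma nonsingular_neg_iff_of_isShortNF {x y : F} :
    W.Nonsingular x (-y) ↔ W.Nonsingular x y := by
  rw [← negY_of_isShortNF (W := W), nonsingular_neg]

variable [DecidableEq F] {x y e : F}

lemma addX_slope_neg_twoTorsion (hP : W.Equation x y) (hT : W.Equation e 0) (hx : x ≠ e) :
    W.addX x e (W.slope x e (-y) 0) = (e * x + 2 * e ^ 2 + W.a₄) / (x - e) := by
  rw [equation_iff_of_isShortNF] at hP hT
  have hxe : x - e ≠ 0 := sub_ne_zero.mpr hx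
  rw [slope_of_X_ne hx]
  simp only [addX, a₁_of_isShortNF, a₂_of_isShortNF]
  field_simp
  linear_combination hP - hT

lemma addY_slope_neg_twoTorsion (hP : W.Equation x y) (hT : W.Equation e 0) (hx : x ≠ e) :
    W.addY x e (-y) (W.slope x e (-y) 0) = (3 * e ^ 2 + W.a₄) * y / (x - e) ^ 2 := by
  have hxe : x - e ≠ 0 := sub_ne_zero.mpr hx
  rw [addY, negAddY, addX_slope_neg_twoTorsion hP hT hx, negY_of_isShortNF, slope_of_X_ne hx]
  field_simp
  ring

theorem exists_some_eq_some_neg_add_twoTorsion {X Y : F} (hP : W.Nonsingular x y)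
    (hT : W.Nonsingular e 0) (hx : x ≠ e) (hX : X = (e * x + 2 * e ^ 2 + W.a₄) / (x - e))
    (hY : Y = (3 * e ^ 2 + W.a₄) * y / (x - e) ^ 2) :
    ∃ (hXY : W.Nonsingular X Y) (hneg : W.Nonsingular x (-y)),
      Point.some _ _ hXY = Point.some _ _ hneg + Point.some _ _ hT := by
  have hneg := nonsingular_neg_iff_of_isShortNF.mpr hP
  have hsum := nonsingular_add hneg hT fun h => hx h.1
  rw [addX_slope_neg_twoTorsion hP.1 hT.1 hx, addY_slope_neg_twoTorsion hP.1 hT.1 hx,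
    ← hX, ← hY] at hsum
  refine ⟨hsum, hneg, ?_⟩
  rw [Point.add_of_X_ne hx]
  simp only [addX_slope_neg_twoTorsion hP.1 hT.1 hx, addY_slope_neg_twoTorsion hP.1 hT.1 hx, hX, hY]

end WeierstrassCurve.Affine

instance : C54.IsShortNF := ⟨rfl, rfl, rfl⟩

/-- The involution τ equals P ↦ -P + (162, 0) in the group law. -/
theorem stmt12 (x y : ℚ) (h : C54.Nonsingular x y) (hx : x ≠ 162) :
    ∃ (hτ : C54.Nonsingular (81 * (2 * x - 567) / (x - 162))
        (-19683 * y / (x - 162) ^ 2))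
      (hneg : C54.Nonsingular x (-y)) (hT : C54.Nonsingular 162 0),
      Affine.Point.some _ _ hτ = Affine.Point.some _ _ hneg + Affine.Point.some _ _ hT := by
  have hT : C54.Nonsingular 162 0 := by
    simp only [Affine.nonsingular_iff, Affine.equation_iff, C54]
    norm_num
  obtain ⟨hτ, hneg, hadd⟩ := Affine.exists_some_eq_some_neg_add_twoTorsion
    (X := 81 * (2 * x - 567) / (x - 162)) (Y := -19683 * y / (x - 162) ^ 2) h hT hx
    (by simp only [C54]; ring) (by simp only [C54]; ring)
  exact ⟨hτ, hneg, hT, hadd⟩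
end

section
/- For every s, the four points P_{3,1} = (5041/48 + 71s/24 + s²/48, 2917/4 + 53s/2 + s²/4) and P_{3,2} = (−2209/16 − 47s/8 − s²/16, √(−3)(s²+106s+2917)(s+35)/144) lie on the curve y² = x³ + a(s)x + b(s), where a(s) = −(1/768)(s+47)(s+71)(s²+70s+1657) and b(s) = (1/55296)(s²+70s+793)(s⁴+212s³+17502s²+648644s+9038089). -/
/-- The points P_{3,1} and P_{3,2} lie on D_s : y² = x³ + a(s)x + b(s),
where r denotes a fixed square root of -3. -/
theorem stmt13 (r : ℂ) (hr : r ^ 2 = -3) (s : ℂ) :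
    letI a : ℂ := -(1 / 768) * (s + 47) * (s + 71) * (s ^ 2 + 70 * s + 1657)
    letI b : ℂ := (1 / 55296) * (s ^ 2 + 70 * s + 793)
      * (s ^ 4 + 212 * s ^ 3 + 17502 * s ^ 2 + 648644 * s + 9038089)
    (2917 / 4 + 53 * s / 2 + s ^ 2 / 4) ^ 2 =
        (5041 / 48 + 71 * s / 24 + s ^ 2 / 48) ^ 3
          + a * (5041 / 48 + 71 * s / 24 + s ^ 2 / 48) + b ∧
    (r * (s ^ 2 + 106 * s + 2917) * (s + 35) / 144) ^ 2 =
        (-2209 / 16 - 47 * s / 8 - s ^ 2 / 16) ^ 3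
          + a * (-2209 / 16 - 47 * s / 8 - s ^ 2 / 16) + b := by
  refine ⟨by ring, ?_⟩
  have h : (r * (s ^ 2 + 106 * s + 2917) * (s + 35) / 144) ^ 2 = r^2 * ((s ^ 2 + 106 * s + 2917) * (s + 35))^2 / 144^2 := by ring
  rw [h, hr]
  ring
end

section
/- The point P_{3,1} = (5041/48 + 71s/24 + s²/48, 2917/4 + 53s/2 + s²/4) on the elliptic curve D_s : y² = x³ + a(s)x + b(s) (with a(s) = −(1/768)(s+47)(s+71)(s²+70s+1657), b(s) = (1/55296)(s²+70s+793)(s⁴+212s³+17502s²+648644s+9038089)) has order exactly 3, provided s ∉ {−35, −53±6√−3} so that D_s is smooth. -/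
/-!
A point `P = (x, y)` with `2P ≠ 0` has order three exactly when `2P = -P`, i.e. when the tangent
at `P` meets the curve again at `P`. Writing the tangent slope as `N / d` with
`d = 2y + a₁x + a₃`, the curve equation turns the 3-division polynomial into
`ψ₃(x) = (a₂ + 3x) d² - a₁ N d - N²`, so `ψ₃(x) = 0` is precisely this flex condition, and it also
rules out `d = 0` at a nonsingular point. For `D_s` one checks that `ψ₃` vanishes identically in
`s` at the `x`-coordinate of `P_{3,1}`, whose `y`-coordinate `((s + 53)² - 36 r²) / 4` is nonzero
away from `s = -53 ± 6r`.
-/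

open WeierstrassCurve Polynomial

namespace WeierstrassCurve.Affine

lemma eval_Ψ₃_of_equation {R : Type*} [CommRing R] {W : Affine R} {x y : R} (h : W.Equation x y) :
    W.Ψ₃.eval x = (W.a₂ + 3 * x) * (2 * y + W.a₁ * x + W.a₃) ^ 2
      - W.a₁ * (3 * x ^ 2 + 2 * W.a₂ * x + W.a₄ - W.a₁ * y) * (2 * y + W.a₁ * x + W.a₃)
      - (3 * x ^ 2 + 2 * W.a₂ * x + W.a₄ - W.a₁ * y) ^ 2 := by
  rw [equation_iff] at h
  simp only [Ψ₃, b₂, b₄, b₆, b₈, eval_add, eval_mul, eval_pow, eval_X, eval_C, eval_ofNat]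
  linear_combination -(12 * x + W.a₁ ^ 2 + 4 * W.a₂) * h

variable {F : Type*} [Field F] {W : Affine F} {x y : F}

lemma Y_ne_negY_of_eval_Ψ₃_eq_zero (h : W.Nonsingular x y) (hψ : W.Ψ₃.eval x = 0) :
    y ≠ W.negY x y := by
  intro hy
  have hd : 2 * y + W.a₁ * x + W.a₃ = 0 := by rw [negY] at hy; linear_combination hy
  rw [nonsingular_iff'] at h
  refine h.2.elim (fun hN => hN ?_) (fun hd' => hd' hd)
  have := eval_Ψ₃_of_equation h.1
  rw [hψ, hd] at this
  exact pow_eq_zero_iff two_ne_zero |>.mp (by linear_combination this)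

variable [DecidableEq F]

lemma addX_slope_self_of_eval_Ψ₃_eq_zero (h : W.Equation x y) (hy : y ≠ W.negY x y)
    (hψ : W.Ψ₃.eval x = 0) : W.addX x x (W.slope x x y y) = x := by
  have hden : y - W.negY x y = 2 * y + W.a₁ * x + W.a₃ := by rw [negY]; ring
  have hd : 2 * y + W.a₁ * x + W.a₃ ≠ 0 := hden ▸ sub_ne_zero.mpr hy
  have hℓ : W.slope x x y y * (2 * y + W.a₁ * x + W.a₃)
      = 3 * x ^ 2 + 2 * W.a₂ * x + W.a₄ - W.a₁ * y := by
    rw [slope_of_Y_ne rfl hy, hden, div_mul_cancel₀ _ hd]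
  refine mul_left_cancel₀ (pow_ne_zero 2 hd) ?_
  rw [addX]
  linear_combination (W.slope x x y y * (2 * y + W.a₁ * x + W.a₃)
    + 3 * x ^ 2 + 2 * W.a₂ * x + W.a₄ - W.a₁ * y + W.a₁ * (2 * y + W.a₁ * x + W.a₃)) * hℓ
    + eval_Ψ₃_of_equation h - hψ

lemma Point.addOrderOf_some_eq_three_of_addX (h : W.Nonsingular x y) (hy : y ≠ W.negY x y)
    (hx : W.addX x x (W.slope x x y y) = x) : addOrderOf (Point.some x y h) = 3 := by
  have hY : W.negAddY x x y (W.slope x x y y) = y := by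
    rw [negAddY, hx, sub_self, mul_zero, zero_add]
  have hdouble : Point.some x y h + Point.some x y h = -Point.some x y h := by
    rw [Point.add_self_of_Y_ne' hy]
    congr 2
  have : Fact (Nat.Prime 3) := ⟨Nat.prime_three⟩
  refine addOrderOf_eq_prime ?_ (Point.some_ne_zero h)
  rw [succ_nsmul, two_nsmul, hdouble, neg_add_cancel]

theorem Point.addOrderOf_some_eq_three (h : W.Nonsingular x y) (hψ : W.Ψ₃.eval x = 0) :
    addOrderOf (Point.some x y h) = 3 :=
  have hy := Y_ne_negY_of_eval_Ψ₃_eq_zero h hψ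
  addOrderOf_some_eq_three_of_addX h hy (addX_slope_self_of_eval_Ψ₃_eq_zero h.1 hy hψ)

end WeierstrassCurve.Affine

/-- The family D_s : y² = x³ + a(s)x + b(s) of general type, over ℂ. -/
noncomputable def Dgen (s : ℂ) : Affine ℂ :=
  { a₁ := 0, a₂ := 0, a₃ := 0,
    a₄ := -(1 / 768) * (s + 47) * (s + 71) * (s ^ 2 + 70 * s + 1657),
    a₆ := (1 / 55296) * (s ^ 2 + 70 * s + 793)
      * (s ^ 4 + 212 * s ^ 3 + 17502 * s ^ 2 + 648644 * s + 9038089) }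

lemma Dgen_equation (s : ℂ) :
    (Dgen s).Equation (5041 / 48 + 71 * s / 24 + s ^ 2 / 48)
      (2917 / 4 + 53 * s / 2 + s ^ 2 / 4) := by
  rw [Affine.equation_iff]
  simp only [Dgen]
  ring

lemma Dgen_nonsingular {s : ℂ} (hy : (2917 / 4 + 53 * s / 2 + s ^ 2 / 4 : ℂ) ≠ 0) :
    (Dgen s).Nonsingular (5041 / 48 + 71 * s / 24 + s ^ 2 / 48)
      (2917 / 4 + 53 * s / 2 + s ^ 2 / 4) := by
  refine (Affine.nonsingular_iff' _ _).mpr ⟨Dgen_equation s, Or.inr ?_⟩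
  simpa [Dgen] using hy

lemma eval_Ψ₃_Dgen (s : ℂ) : (Dgen s).Ψ₃.eval (5041 / 48 + 71 * s / 24 + s ^ 2 / 48) = 0 := by
  simp only [Ψ₃, b₂, b₄, b₆, b₈, Dgen, eval_add, eval_mul, eval_pow, eval_X, eval_C, eval_ofNat]
  ring

theorem stmt14_general (r : ℂ) (hr : r ^ 2 = -3) (s : ℂ)
    (h2 : s ≠ -53 + 6 * r) (h3 : s ≠ -53 - 6 * r) :
    ∃ h : (Dgen s).Nonsingular (5041 / 48 + 71 * s / 24 + s ^ 2 / 48)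
        (2917 / 4 + 53 * s / 2 + s ^ 2 / 4),
      addOrderOf (Affine.Point.some _ _ h) = 3 := by
  have hy : (2917 / 4 + 53 * s / 2 + s ^ 2 / 4 : ℂ) ≠ 0 := by
    have hfactor : (2917 / 4 + 53 * s / 2 + s ^ 2 / 4 : ℂ)
        = (s - (-53 + 6 * r)) * (s - (-53 - 6 * r)) / 4 := by
      linear_combination 9 * hr
    rw [hfactor]
    exact div_ne_zero (mul_ne_zero (sub_ne_zero.mpr h2) (sub_ne_zero.mpr h3)) (by norm_num)
  exact ⟨Dgen_nonsingular hy, Affine.Point.addOrderOf_some_eq_three _ (eval_Ψ₃_Dgen s)⟩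

/-- P_{3,1} has order exactly 3 on D_s for s away from the singular fibers,
where r denotes a fixed square root of -3. -/
theorem stmt14 (r : ℂ) (hr : r ^ 2 = -3) (s : ℂ) (h1 : s ≠ -35)
    (h2 : s ≠ -53 + 6 * r) (h3 : s ≠ -53 - 6 * r) :
    ∃ h : (Dgen s).Nonsingular (5041 / 48 + 71 * s / 24 + s ^ 2 / 48)
        (2917 / 4 + 53 * s / 2 + s ^ 2 / 4),
      addOrderOf (Affine.Point.some _ _ h) = 3 :=
  stmt14_general r hr s h2 h3
end

section
/- For the elliptic curve D_s : y² = x³ + a(s)x + b(s) with a(s) = −(1/768)(s+47)(s+71)(s²+70s+1657) and b(s) = (1/55296)(s²+70s+793)(s⁴+212s³+17502s²+648644s+9038089), the j-invariant equals (1/64)·(s+47)³(s+71)³(s²+70s+1657)³ / ((s+35)³(s²+106s+2917)³), for s outside the singular set. -/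
/-- The j-invariant of D_s. -/
theorem stmt15 (s : ℂ) (h : (s + 35) * (s ^ 2 + 106 * s + 2917) ≠ 0) :
    letI a : ℂ := -(1 / 768) * (s + 47) * (s + 71) * (s ^ 2 + 70 * s + 1657)
    letI b : ℂ := ((1 / 55296) * (s ^ 2 + 70 * s + 793)
      * (s ^ 4 + 212 * s ^ 3 + 17502 * s ^ 2 + 648644 * s + 9038089))
    (-1728 * (4 * a) ^ 3 / (-16 * (4 * a ^ 3 + 27 * b ^ 2)) =
      (1 / 64) * ((s + 47) ^ 3 * (s + 71) ^ 3 * (s ^ 2 + 70 * s + 1657) ^ 3)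
        / ((s + 35) ^ 3 * (s ^ 2 + 106 * s + 2917) ^ 3)) := by
  have h1 : (s + 35) ≠ 0 := fun hx => h (by rw [hx]; ring)
  have h2 : (s ^ 2 + 106 * s + 2917) ≠ 0 := fun hx => h (by rw [hx]; ring)
  have hd : -16 * (4 * (-(1 / 768) * (s + 47) * (s + 71) * (s ^ 2 + 70 * s + 1657)) ^ 3
        + 27 * ((1 / 55296) * (s ^ 2 + 70 * s + 793)
          * (s ^ 4 + 212 * s ^ 3 + 17502 * s ^ 2 + 648644 * s + 9038089)) ^ 2)
      = (1 / 64) * ((s + 35) ^ 3 * (s ^ 2 + 106 * s + 2917) ^ 3) := by ring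
  show _ = _
  rw [hd]
  field_simp
  ring
end

section
/- The substitutions s = ξ₆(t) := −(27t³−1304t²+17920t−71680)/((t−8)(t−16)²) and m = ψ(t) := −(−128t²+3t³+1536t−6144)/((t−8)(t−16)²) satisfy Δ(s,m) = 0 identically in t (for t ≠ 8, 16), where Δ(s,m) := s³ + 85s² − 4ms² − 568ms + 1555s − 16m²s − 1136m² − 15465 − 20164m + 64m³. -/
/-- s = ξ₆(t), m = ψ(t) satisfy Δ(s,m) = 0. -/
theorem stmt16 (t : ℚ) (h8 : t ≠ 8) (h16 : t ≠ 16) :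
    letI s : ℚ := -(27 * t ^ 3 - 1304 * t ^ 2 + 17920 * t - 71680)
      / ((t - 8) * (t - 16) ^ 2)
    letI m : ℚ := -(-128 * t ^ 2 + 3 * t ^ 3 + 1536 * t - 6144)
      / ((t - 8) * (t - 16) ^ 2)
    s ^ 3 + 85 * s ^ 2 - 4 * m * s ^ 2 - 568 * m * s + 1555 * s
      - 16 * m ^ 2 * s - 1136 * m ^ 2 - 15465 - 20164 * m + 64 * m ^ 3 = 0 := by
  have hd : (t - 8) * (t - 16) ^ 2 ≠ 0 := by
    have : t - 8 ≠ 0 := sub_ne_zero.mpr h8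
    have h2 : t - 16 ≠ 0 := sub_ne_zero.mpr h16
    positivity
  field_simp
  ring
end

section
/- With the change of parameter s = −47 + 12u, the Weierstrass coefficients of the family D_s coincide (after the identification) with those of the Silverberg family A(u): specifically, a(−47+12u) = k⁴·(−27u(8+u³)) and b(−47+12u) = k⁶·(−54(8+20u³−u⁶)) for a suitable nonzero rational constant k independent of u, where a(s) = −(1/768)(s+47)(s+71)(s²+70s+1657) and b(s) = (1/55296)(s²+70s+793)(s⁴+212s³+17502s²+648644s+9038089). -/
/-- After s = -47 + 12u the family D_s coincides with Silverberg's family A(u)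
up to the change of coordinates (x,y) ↦ (x/k², y/k³). -/
theorem stmt18 :
    ∃ k : ℚ, k ≠ 0 ∧ ∀ u : ℚ,
      -(1 / 768) * ((-47 + 12 * u) + 47) * ((-47 + 12 * u) + 71)
          * ((-47 + 12 * u) ^ 2 + 70 * (-47 + 12 * u) + 1657) =
        k ^ 4 * (-27 * u * (8 + u ^ 3)) ∧
      (1 / 55296) * ((-47 + 12 * u) ^ 2 + 70 * (-47 + 12 * u) + 793)
          * ((-47 + 12 * u) ^ 4 + 212 * (-47 + 12 * u) ^ 3
            + 17502 * (-47 + 12 * u) ^ 2 + 648644 * (-47 + 12 * u) + 9038089) =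
        k ^ 6 * (-54 * (8 + 20 * u ^ 3 - u ^ 6)) := by
  exact ⟨1, one_ne_zero, fun u => ⟨by ring, by ring⟩⟩
end

section
/- For all t with t ≠ 8, 16, the points P = (x₆₁, y₆₁) with x₆₁ = −(1/3)(47t⁶ − 3072t⁵ + 86016t⁴ − 1327104t³ + 11796480t² − 56623104t + 113246208)/((t−8)²(t−16)⁴) and y₆₁ = −4t³(t²−24t+192)(7t²−144t+768)/((t−16)⁵(t−8)²) lie on the curve y² = x³ + a(ξ₆(t))x + b(ξ₆(t)), where ξ₆(t) = −(27t³−1304t²+17920t−71680)/((t−8)(t−16)²) and a, b are the Weierstrass coefficients of the family D_s. -/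
set_option maxHeartbeats 4000000 in
/-- The point (x₆₁, y₆₁) lies on the curve y² = x³ + a(ξ₆(t))x + b(ξ₆(t)). -/
theorem stmt19 (t : ℚ) (h8 : t ≠ 8) (h16 : t ≠ 16) :
    letI s : ℚ := -(27 * t ^ 3 - 1304 * t ^ 2 + 17920 * t - 71680)
      / ((t - 8) * (t - 16) ^ 2)
    letI x : ℚ := -(1 / 3) * (47 * t ^ 6 - 3072 * t ^ 5 + 86016 * t ^ 4
      - 1327104 * t ^ 3 + 11796480 * t ^ 2 - 56623104 * t + 113246208)
      / ((t - 8) ^ 2 * (t - 16) ^ 4)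
    letI y : ℚ := -4 * t ^ 3 * (t ^ 2 - 24 * t + 192)
      * (7 * t ^ 2 - 144 * t + 768) / ((t - 16) ^ 5 * (t - 8) ^ 2)
    y ^ 2 = x ^ 3
      + (-(1 / 768) * (s + 47) * (s + 71) * (s ^ 2 + 70 * s + 1657)) * x
      + (1 / 55296) * (s ^ 2 + 70 * s + 793)
        * (s ^ 4 + 212 * s ^ 3 + 17502 * s ^ 2 + 648644 * s + 9038089) := by
  have h8' : t - 8 ≠ 0 := sub_ne_zero.mpr h8
  have h16' : t - 16 ≠ 0 := sub_ne_zero.mpr h16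
  field_simp
  ring
end
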